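/- Let μ be a Borel probability measure on ℝ with |μ̂(ξ)| ≤ C|ξ|^{-σ} for all |ξ| ≥ 1, where σ > 0, and with ∫_{|ξ|≤R}|μ̂(ξ)|² dξ ≤ C R^{1-s} for all R ≥ 1, where s > 0. If 2σ + s > 1, then for any 0 < η < 2σ + s - 1, ∫_ℝ |μ̂(ξ)|⁴ (1+|ξ|)^η dξ < ∞. -/

import Mathlib

open MeasureTheory Metric
open scoped ENNReal NNReal

/-- Fourier transform of a measure on `ℝ`. -/
noncomputable def ftR (μ : Measure ℝ) (ξ : ℝ) : ℂ :=
  ∫ x, Complex.exp (-(2 * Real.pi * ξ * x) * Complex.I) ∂μ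

lemma ftR_norm_exp (ξ x : ℝ) : ‖Complex.exp (-(2 * Real.pi * ξ * x) * Complex.I)‖ = 1 := by
  have h : (-(2 * (Real.pi:ℂ) * (ξ:ℂ) * (x:ℂ))) = ((-(2 * Real.pi * ξ * x) : ℝ) : ℂ) := by
    push_cast; ring
  rw [h, Complex.norm_exp_ofReal_mul_I]

lemma ftR_le_one (μ : Measure ℝ) [IsProbabilityMeasure μ] (ξ : ℝ) : ‖ftR μ ξ‖ ≤ 1 := by
  calc ‖ftR μ ξ‖ ≤ ∫ x, ‖Complex.exp (-(2 * Real.pi * ξ * x) * Complex.I)‖ ∂μ :=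
        norm_integral_le_integral_norm _
    _ = 1 := by
        simp only [ftR_norm_exp]
        simp

lemma ftR_continuous (μ : Measure ℝ) [IsProbabilityMeasure μ] : Continuous (ftR μ) := by
  apply continuous_of_dominated (bound := fun _ => (1:ℝ))
  · intro ξ
    exact (Continuous.aestronglyMeasurable (by continuity))
  · intro ξ
    filter_upwards with x
    rw [ftR_norm_exp]
  · exact integrable_const 1
  · filter_upwards with x
    continuity

theorem stmt19 (μ : Measure ℝ) [IsProbabilityMeasure μ]
    (C σ s : ℝ) (hC : 0 < C) (hσ : 0 < σ) (hs : 0 < s)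
    (hdecay : ∀ ξ : ℝ, 1 ≤ |ξ| → ‖ftR μ ξ‖ ≤ C * |ξ| ^ (-σ))
    (hl2 : ∀ R : ℝ, 1 ≤ R →
      (∫ ξ in Set.Icc (-R) R, ‖ftR μ ξ‖ ^ 2) ≤ C * R ^ (1 - s))
    (hsum : 1 < 2 * σ + s)
    (η : ℝ) (hη0 : 0 < η) (hη1 : η < 2 * σ + s - 1) :
    Integrable (fun ξ => ‖ftR μ ξ‖ ^ 4 * (1 + |ξ|) ^ η) volume := by
  have hFcont : Continuous fun ξ : ℝ => ‖ftR μ ξ‖ := (ftR_continuous μ).norm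
  have hwcont : Continuous fun ξ : ℝ => (1 + |ξ|) ^ η :=
    (continuous_const.add continuous_abs).rpow_const (fun x => Or.inr hη0.le)
  have hfc : Continuous fun ξ : ℝ => ‖ftR μ ξ‖ ^ 4 * (1 + |ξ|) ^ η :=
    (hFcont.pow 4).mul hwcont
  have hnn : ∀ ξ : ℝ, 0 ≤ ‖ftR μ ξ‖ ^ 4 * (1 + |ξ|) ^ η := by
    intro ξ; positivity
  refine ⟨hfc.aestronglyMeasurable, ?_⟩
  rw [hasFiniteIntegral_iff_ofReal (ae_of_all _ hnn)]
  set g : ℝ → ℝ≥0∞ := fun ξ => ENNReal.ofReal (‖ftR μ ξ‖ ^ 4 * (1 + |ξ|) ^ η) with hg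
  -- dyadic annuli
  set S : ℕ → Set ℝ := fun n =>
    Nat.casesOn n (Set.Icc (-1:ℝ) 1)
      (fun k => Set.Icc (-(2^(k+1):ℝ)) (2^(k+1)) \ Set.Icc (-(2^k:ℝ)) (2^k)) with hS
  have hpow_pos : ∀ m : ℕ, (0:ℝ) < 2^m := fun m => pow_pos two_pos m
  have hone_le : ∀ m : ℕ, (1:ℝ) ≤ 2^m := fun m => one_le_pow₀ one_le_two
  -- the union of the annuli covers ℝ
  have hcover : (Set.univ : Set ℝ) ⊆ ⋃ n, S n := by
    have h1 : ∀ n : ℕ, Set.Icc (-(2^n:ℝ)) (2^n) ⊆ ⋃ k, S k := by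
      intro n
      induction n with
      | zero => intro ξ hξ; exact Set.mem_iUnion.2 ⟨0, by show ξ ∈ Set.Icc (-1:ℝ) 1; simpa using hξ⟩
      | succ n ih =>
        intro ξ hξ
        by_cases h : ξ ∈ Set.Icc (-(2^n:ℝ)) (2^n)
        · exact ih h
        · exact Set.mem_iUnion.2 ⟨n+1, ⟨hξ, h⟩⟩
    intro ξ _
    obtain ⟨n, hn⟩ := exists_nat_gt |ξ|
    have h2n : (n:ℝ) ≤ 2^n := by
      exact_mod_cast (Nat.lt_two_pow_self (n := n)).le
    exact h1 n (by
      rw [Set.mem_Icc, ← abs_le]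
      exact le_trans hn.le h2n)
  -- L² bound in lintegral form
  have hint : ∀ m : ℕ, IntegrableOn (fun ξ => ‖ftR μ ξ‖^2)
      (Set.Icc (-(2^m:ℝ)) (2^m)) volume := fun m => (hFcont.pow 2).integrableOn_Icc
  have hL2m : ∀ m : ℕ, ∫⁻ ξ in Set.Icc (-(2^m:ℝ)) (2^m), ENNReal.ofReal (‖ftR μ ξ‖^2)
      ≤ ENNReal.ofReal (C * ((2:ℝ)^m)^(1-s)) := by
    intro m
    rw [← ofReal_integral_eq_lintegral_ofReal (hint m) (ae_of_all _ (fun ξ => by positivity))]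
    exact ENNReal.ofReal_le_ofReal (hl2 (2^m) (hone_le m))
  -- bound on each annulus
  set B : ℕ → ℝ := fun n =>
    (C * ((2:ℝ)^n) ^ (-σ))^2 * ((2:ℝ)^(n+2)) ^ η * (C * ((2:ℝ)^(n+1)) ^ (1-s)) with hB
  have hBnn : ∀ n, 0 ≤ B n := by
    intro n
    have := hpow_pos n
    have := hpow_pos (n+1)
    have := hpow_pos (n+2)
    positivity
  have hpiece : ∀ n : ℕ, ∫⁻ ξ in S (n+1), g ξ ≤ ENNReal.ofReal (B n) := by
    intro n
    set D : ℝ := (C * ((2:ℝ)^n) ^ (-σ))^2 * ((2:ℝ)^(n+2)) ^ η with hD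
    have hDnn : 0 ≤ D := by
      have := hpow_pos n
      have := hpow_pos (n+2)
      positivity
    have hmem : ∀ ξ ∈ S (n+1),
        g ξ ≤ ENNReal.ofReal D * ENNReal.ofReal (‖ftR μ ξ‖^2) := by
      intro ξ hξ
      obtain ⟨hξ1, hξ2⟩ := hξ
      have habs_le : |ξ| ≤ 2^(n+1) := abs_le.mpr ⟨hξ1.1, hξ1.2⟩
      have habs_ge : (2:ℝ)^n ≤ |ξ| := by
        rw [Set.mem_Icc, ← abs_le, not_le] at hξ2
        exact hξ2.le
      have h1ξ : (1:ℝ) ≤ |ξ| := le_trans (hone_le n) habs_ge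
      have hFd : ‖ftR μ ξ‖ ≤ C * ((2:ℝ)^n)^(-σ) := by
        refine le_trans (hdecay ξ h1ξ) ?_
        exact mul_le_mul_of_nonneg_left
          (Real.rpow_le_rpow_of_nonpos (hpow_pos n) habs_ge (neg_nonpos.mpr hσ.le)) hC.le
      have hw : (1+|ξ|)^η ≤ ((2:ℝ)^(n+2))^η := by
        apply Real.rpow_le_rpow (by positivity) _ hη0.le
        have h1 : (1:ℝ) ≤ 2^(n+1) := hone_le (n+1)
        have h2 : (2:ℝ)^(n+2) = 2 * 2^(n+1) := by ring
        linarith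
      have hF2 : ‖ftR μ ξ‖^2 ≤ (C * ((2:ℝ)^n)^(-σ))^2 :=
        pow_le_pow_left₀ (norm_nonneg _) hFd 2
      have key : ‖ftR μ ξ‖^4 * (1+|ξ|)^η ≤ D * ‖ftR μ ξ‖^2 := by
        have hc : ‖ftR μ ξ‖^4 * (1+|ξ|)^η
            = (‖ftR μ ξ‖^2 * (1+|ξ|)^η) * ‖ftR μ ξ‖^2 := by ring
        rw [hc, hD]
        apply mul_le_mul_of_nonneg_right _ (by positivity)
        exact mul_le_mul hF2 hw (by positivity) (by positivity)
      calc g ξ ≤ ENNReal.ofReal (D * ‖ftR μ ξ‖^2) := ENNReal.ofReal_le_ofReal key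
        _ = ENNReal.ofReal D * ENNReal.ofReal (‖ftR μ ξ‖^2) := ENNReal.ofReal_mul hDnn
    have hmeas : Measurable fun ξ : ℝ => ENNReal.ofReal D * ENNReal.ofReal (‖ftR μ ξ‖^2) :=
      measurable_const.mul (ENNReal.measurable_ofReal.comp (hFcont.pow 2).measurable)
    calc ∫⁻ ξ in S (n+1), g ξ
        ≤ ∫⁻ ξ in S (n+1), ENNReal.ofReal D * ENNReal.ofReal (‖ftR μ ξ‖^2) :=
          setLIntegral_mono hmeas hmem
      _ = ENNReal.ofReal D * ∫⁻ ξ in S (n+1), ENNReal.ofReal (‖ftR μ ξ‖^2) :=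
          lintegral_const_mul _ (ENNReal.measurable_ofReal.comp (hFcont.pow 2).measurable)
      _ ≤ ENNReal.ofReal D *
          ∫⁻ ξ in Set.Icc (-(2^(n+1):ℝ)) (2^(n+1)), ENNReal.ofReal (‖ftR μ ξ‖^2) := by
          gcongr
          exact Set.diff_subset
      _ ≤ ENNReal.ofReal D * ENNReal.ofReal (C * ((2:ℝ)^(n+1))^(1-s)) := by
          gcongr
          exact hL2m (n+1)
      _ = ENNReal.ofReal (B n) := by rw [← ENNReal.ofReal_mul hDnn]
  -- bound on the central interval
  have hpiece0 : ∫⁻ ξ in S 0, g ξ ≤ ENNReal.ofReal ((2:ℝ)^η) * ENNReal.ofReal 2 := by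
    have hmem : ∀ ξ ∈ S 0, g ξ ≤ ENNReal.ofReal ((2:ℝ)^η) := by
      intro ξ hξ
      apply ENNReal.ofReal_le_ofReal
      have h1 : |ξ| ≤ 1 := abs_le.mpr ⟨hξ.1, hξ.2⟩
      have hF4 : ‖ftR μ ξ‖^4 ≤ 1 := pow_le_one₀ (norm_nonneg _) (ftR_le_one μ ξ)
      have hw : (1+|ξ|)^η ≤ (2:ℝ)^η :=
        Real.rpow_le_rpow (by positivity) (by linarith) hη0.le
      calc ‖ftR μ ξ‖^4 * (1+|ξ|)^η ≤ 1 * (2:ℝ)^η := by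
            apply mul_le_mul hF4 hw (by positivity) one_pos.le
        _ = (2:ℝ)^η := one_mul _
    calc ∫⁻ ξ in S 0, g ξ ≤ ∫⁻ _ in S 0, ENNReal.ofReal ((2:ℝ)^η) :=
          setLIntegral_mono measurable_const hmem
      _ = ENNReal.ofReal ((2:ℝ)^η) * ENNReal.ofReal 2 := by
          rw [setLIntegral_const, show S 0 = Set.Icc (-1:ℝ) 1 from rfl, Real.volume_Icc]
          norm_num
  -- geometric form of B
  have hBeq : ∀ n : ℕ, B n
      = C^3 * (2:ℝ)^(2*η+1-s) * ((2:ℝ)^(η+1-s-2*σ))^n := by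
    intro n
    have h2 : ∀ (m : ℕ) (a : ℝ), ((2:ℝ)^m) ^ a = (2:ℝ) ^ ((m:ℝ) * a) := by
      intro m a
      rw [← Real.rpow_natCast 2 m, ← Real.rpow_mul (by norm_num)]
    have h2' : ∀ a : ℝ, ((2:ℝ)^a)^(2:ℕ) = (2:ℝ)^(a*2) := by
      intro a
      rw [← Real.rpow_natCast ((2:ℝ)^a) 2, ← Real.rpow_mul (by norm_num)]
      norm_num
    have hadd : ∀ a b : ℝ, (2:ℝ)^a * (2:ℝ)^b = (2:ℝ)^(a+b) :=
      fun a b => (Real.rpow_add two_pos a b).symm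
    calc B n = C^3 * (((2:ℝ)^((n:ℝ)*(-σ)))^(2:ℕ) *
          ((2:ℝ)^(((n:ℝ)+2)*η) * (2:ℝ)^(((n:ℝ)+1)*(1-s)))) := by
          rw [hB]
          simp only [h2]
          push_cast
          ring
      _ = C^3 * ((2:ℝ)^((n:ℝ)*(-σ)*2) *
          ((2:ℝ)^(((n:ℝ)+2)*η) * (2:ℝ)^(((n:ℝ)+1)*(1-s)))) := by rw [h2']
      _ = C^3 * (2:ℝ)^((n:ℝ)*(-σ)*2 + ((((n:ℝ)+2)*η) + (((n:ℝ)+1)*(1-s)))) := by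
          rw [hadd, hadd]
      _ = C^3 * (2:ℝ)^((2*η+1-s) + (η+1-s-2*σ)*(n:ℝ)) := by
          congr 1
          ring
      _ = C^3 * ((2:ℝ)^(2*η+1-s) * (2:ℝ)^((η+1-s-2*σ)*(n:ℝ))) := by rw [hadd]
      _ = C^3 * (2:ℝ)^(2*η+1-s) * ((2:ℝ)^(η+1-s-2*σ))^n := by
          rw [Real.rpow_mul (by norm_num), Real.rpow_natCast]
          ring
  have hr0 : (0:ℝ) < (2:ℝ)^(η+1-s-2*σ) := Real.rpow_pos_of_pos two_pos _
  have hr1 : (2:ℝ)^(η+1-s-2*σ) < 1 :=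
    Real.rpow_lt_one_of_one_lt_of_neg one_lt_two (by linarith)
  have hBsum : Summable B := by
    apply Summable.congr (f := fun n => C^3 * (2:ℝ)^(2*η+1-s) * ((2:ℝ)^(η+1-s-2*σ))^n)
    · exact (summable_geometric_of_lt_one hr0.le hr1).mul_left _
    · exact fun n => (hBeq n).symm
  -- assemble
  set M : ℕ → ℝ≥0∞ := fun n =>
    Nat.casesOn n (ENNReal.ofReal ((2:ℝ)^η) * ENNReal.ofReal 2)
      (fun k => ENNReal.ofReal (B k)) with hM
  have hMle : ∀ n, ∫⁻ ξ in S n, g ξ ≤ M n := by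
    intro n
    cases n with
    | zero => exact hpiece0
    | succ k => exact hpiece k
  calc ∫⁻ ξ, g ξ = ∫⁻ ξ in Set.univ, g ξ := (setLIntegral_univ g).symm
    _ ≤ ∫⁻ ξ in ⋃ n, S n, g ξ := lintegral_mono_set hcover
    _ ≤ ∑' n, ∫⁻ ξ in S n, g ξ := lintegral_iUnion_le _ _
    _ ≤ ∑' n, M n := ENNReal.tsum_le_tsum hMle
    _ = M 0 + ∑' n, M (n+1) := tsum_eq_zero_add' ENNReal.summable
    _ = M 0 + ENNReal.ofReal (∑' n, B n) := by
        rw [← ENNReal.ofReal_tsum_of_nonneg hBnn hBsum]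
    _ < ⊤ := by
        apply ENNReal.add_lt_top.mpr
        constructor
        · exact ENNReal.mul_lt_top ENNReal.ofReal_lt_top ENNReal.ofReal_lt_top
        · exact ENNReal.ofReal_lt_top
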